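/- arXiv:1311.6413 — 2 statements merged into one kernel-verified Lean document; each statement's English description precedes it below -/
import Mathlib

section
/- The function u(x,t) = -√c · tanh(√c(x - ct)) satisfies the foam drainage equation u_t + 2u²u_x - (u_x)² - (1/2)u·u_xx = 0 for all real x, t, where c > 0. -/
/-!
The profile `f ξ = -√c tanh (√c ξ)` solves the Riccati equation `f' = f² - c`, hence `f'' = 2 f f'`.
For a travelling wave `u x t = f (x - c t)` the foam drainage operator then becomes
`-c f' + 2 f² f' - f'² - f² f' = f' (f² - c - f') = 0`.
-/

open Real

noncomputable def foamDrainageOperator (u : ℝ → ℝ → ℝ) (x t : ℝ) : ℝ :=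
  deriv (fun s => u x s) t
    + 2 * (u x t) ^ 2 * deriv (fun y => u y t) x
    - (deriv (fun y => u y t) x) ^ 2
    - (1 / 2) * u x t * deriv (fun y => deriv (fun z => u z t) y) x

theorem hasDerivAt_tanh (x : ℝ) : HasDerivAt tanh (1 - tanh x ^ 2) x := by
  have hquot := (hasDerivAt_sinh x).div (hasDerivAt_cosh x) (cosh_pos x).ne'
  rw [show tanh = sinh / cosh from funext tanh_eq_sinh_div_cosh]
  refine hquot.congr_deriv ?_
  rw [Pi.div_apply]
  field_simp

theorem hasDerivAt_neg_mul_tanh_mul (a ξ : ℝ) :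
    HasDerivAt (fun ξ => -a * tanh (a * ξ)) ((-a * tanh (a * ξ)) ^ 2 - a ^ 2) ξ := by
  refine (((hasDerivAt_tanh (a * ξ)).comp ξ ((hasDerivAt_id ξ).const_mul a)).const_mul (-a)
    ).congr_deriv ?_
  ring

theorem foamDrainageOperator_travelingWave_eq_zero {f : ℝ → ℝ} {c : ℝ}
    (hf : ∀ ξ, HasDerivAt f (f ξ ^ 2 - c) ξ) (x t : ℝ) :
    foamDrainageOperator (fun x t => f (x - c * t)) x t = 0 := by
  set ξ := x - c * t
  have hderiv : deriv f = fun ξ => f ξ ^ 2 - c := funext fun ξ => (hf ξ).deriv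
  have htime : HasDerivAt (fun s => f (x - c * s)) ((f ξ ^ 2 - c) * -c) t := by
    refine ((hf ξ).comp t (((hasDerivAt_id t).const_mul c).const_sub x)).congr_deriv ?_
    ring
  have hspace : deriv (fun y => f (y - c * t)) = fun y => f (y - c * t) ^ 2 - c := by
    funext y
    rw [deriv_comp_sub_const, hderiv]
  have hspace2 : HasDerivAt (fun y => f (y - c * t) ^ 2 - c) (2 * f ξ * (f ξ ^ 2 - c)) x := by
    refine (((hf ξ).comp_sub_const x (c * t)).pow 2 |>.sub_const c).congr_deriv ?_
    ring
  simp only [foamDrainageOperator, htime.deriv, hspace, hspace2.deriv]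
  ring

theorem foam_drainage_tanh_solution (c : ℝ) (hc : 0 < c) (x t : ℝ) :
    (fun u : ℝ → ℝ → ℝ =>
      deriv (fun s => u x s) t
        + 2 * (u x t) ^ 2 * deriv (fun y => u y t) x
        - (deriv (fun y => u y t) x) ^ 2
        - (1 / 2) * u x t * deriv (fun y => deriv (fun z => u z t) y) x = 0)
      (fun x t => -Real.sqrt c * Real.tanh (Real.sqrt c * (x - c * t))) := by
  have hriccati (ξ : ℝ) : HasDerivAt (fun ξ => -√c * tanh (√c * ξ))
      ((-√c * tanh (√c * ξ)) ^ 2 - c) ξ := by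
    simpa only [sq_sqrt hc.le] using hasDerivAt_neg_mul_tanh_mul √c ξ
  exact foamDrainageOperator_travelingWave_eq_zero hriccati x t
end

section
/- The function u(x,t) = -1/2 + 1/(1 + e^{x - t/4}) satisfies the foam drainage equation u_t + 2u²u_x - (u_x)² - (1/2)u·u_xx = 0 for all real x, t. -/
/-!
The wave is `f (x - t/4)` with profile `f z = -1/2 + 1/(1 + eᶻ)`, which solves the Riccati
equation `f' = f² - 1/4`. For any traveling wave `u = f (x - v t)` with `f' = f² - v` one has
`f'' = 2 f f'`, and the foam drainage residual factors as `f' (f² - v - f')`, which vanishes.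
-/

open Real

noncomputable def foamDrainageResidual (u : ℝ → ℝ → ℝ) (x t : ℝ) : ℝ :=
  deriv (fun s => u x s) t
    + 2 * (u x t) ^ 2 * deriv (fun y => u y t) x
    - (deriv (fun y => u y t) x) ^ 2
    - (1 / 2) * u x t * deriv (fun y => deriv (fun z => u z t) y) x

theorem foamDrainageResidual_travelingWave {f : ℝ → ℝ} {v : ℝ}
    (hf : ∀ z, HasDerivAt f (f z ^ 2 - v) z) (x t : ℝ) :
    foamDrainageResidual (fun x t => f (x - v * t)) x t = 0 := by
  have hx : ∀ y, HasDerivAt (fun y => f (y - v * t)) (f (y - v * t) ^ 2 - v) y :=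
    fun y => (hf _).comp_sub_const y _
  have ht : HasDerivAt (fun s => f (x - v * s)) ((f (x - v * t) ^ 2 - v) * -v) t := by
    have hlin : HasDerivAt (fun s => x - v * s) (-v) t := by
      simpa using ((hasDerivAt_id t).const_mul v).const_sub x
    exact (hf _).comp t hlin
  have hxx : HasDerivAt (fun y => f (y - v * t) ^ 2 - v)
      (2 * f (x - v * t) * (f (x - v * t) ^ 2 - v)) x := by
    simpa using ((hx x).pow 2).sub_const v
  unfold foamDrainageResidual
  rw [ht.deriv, (hx x).deriv, funext fun y => (hx y).deriv, hxx.deriv]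
  ring

noncomputable def foamProfile (z : ℝ) : ℝ := -(1 / 2) + 1 / (1 + exp z)

theorem hasDerivAt_foamProfile (z : ℝ) :
    HasDerivAt foamProfile (foamProfile z ^ 2 - 1 / 4) z := by
  have hpos : 0 < 1 + exp z := by positivity
  have h : HasDerivAt foamProfile ((0 * (1 + exp z) - 1 * exp z) / (1 + exp z) ^ 2) z :=
    ((hasDerivAt_const z (1 : ℝ)).div ((hasDerivAt_exp z).const_add 1) hpos.ne').const_add _
  refine h.congr_deriv ?_
  unfold foamProfile
  field_simp
  ring

theorem foam_drainage_exp_solution (x t : ℝ) :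
    (fun u : ℝ → ℝ → ℝ =>
      deriv (fun s => u x s) t
        + 2 * (u x t) ^ 2 * deriv (fun y => u y t) x
        - (deriv (fun y => u y t) x) ^ 2
        - (1 / 2) * u x t * deriv (fun y => deriv (fun z => u z t) y) x = 0)
      (fun x t => -(1 / 2) + 1 / (1 + Real.exp (x - t / 4))) := by
  have hwave : (fun x t => -(1 / 2) + 1 / (1 + Real.exp (x - t / 4)))
      = fun x t => foamProfile (x - 1 / 4 * t) := by
    funext x t
    rw [foamProfile, one_div_mul_eq_div]
  rw [hwave]
  exact foamDrainageResidual_travelingWave hasDerivAt_foamProfile x t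
end
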